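/- arXiv:2501.11480 — 7 statements merged into one kernel-verified Lean document; each statement's English description precedes it below -/
import Mathlib

section
/- Let l and k be positive integers and let m be a positive integer. Let η ∈ ℤ₊^m with |η| = l (the sum of the entries of η equals l), and suppose β = (k+1+l, …, k+1+l) − η has all nonnegative entries. Then for any α ∈ ℤ₊^m with |α| = l and α ≠ η, one has (β+α)! > (β+η)!, where for a multi-index ζ = (ζ₁,…,ζ_m) we write ζ! = ζ₁!⋯ζ_m!. -/
lemma lemA (x N : ℕ) (h : N ≤ x) :
    N.factorial * (N + 1) ^ (x - N) ≤ x.factorial := by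
  induction x, h using Nat.le_induction with
  | base => simp
  | succ n hn ih =>
    have h1 : n + 1 - N = (n - N) + 1 := by omega
    rw [h1, pow_succ, Nat.factorial_succ]
    calc N.factorial * ((N + 1) ^ (n - N) * (N + 1))
        = (N + 1) * (N.factorial * (N + 1) ^ (n - N)) := by ring
      _ ≤ (n + 1) * n.factorial := Nat.mul_le_mul (by omega) ih

lemma lemB (x N : ℕ) (h : x ≤ N) :
    N.factorial ≤ x.factorial * N ^ (N - x) := by
  induction N, h using Nat.le_induction with
  | base => simp
  | succ n hn ih =>
    have h1 : n + 1 - x = (n - x) + 1 := by omega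
    rw [h1, pow_succ, Nat.factorial_succ]
    have hp : n ^ (n - x) ≤ (n + 1) ^ (n - x) := Nat.pow_le_pow_left (by omega) _
    calc (n + 1) * n.factorial
        ≤ (n + 1) * (x.factorial * n ^ (n - x)) := Nat.mul_le_mul_left _ ih
      _ ≤ (n + 1) * (x.factorial * (n + 1) ^ (n - x)) :=
          Nat.mul_le_mul_left _ (Nat.mul_le_mul_left _ hp)
      _ = x.factorial * ((n + 1) ^ (n - x) * (n + 1)) := by ring

lemma lemC (x N : ℕ) :
    N.factorial * (N + 1) ^ (x - N) ≤ x.factorial * N ^ (N - x) := by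
  rcases le_total N x with h | h
  · have hx : N - x = 0 := by omega
    rw [hx, pow_zero, mul_one]
    exact lemA x N h
  · have hx : x - N = 0 := by omega
    rw [hx, pow_zero, mul_one]
    exact lemB x N h

theorem stmt_0 (m l k : ℕ) (hm : 0 < m) (hl : 0 < l) (hk : 0 < k)
    (η : Fin m → ℕ) (hη : ∑ i, η i = l)
    (β : Fin m → ℕ) (hβ : ∀ i, β i + η i = k + 1 + l) :
    ∀ α : Fin m → ℕ, ∑ i, α i = l → α ≠ η →
      ∏ i, Nat.factorial (β i + α i) > ∏ i, Nat.factorial (β i + η i) := by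
  intro α hα hne
  set N := k + 1 + l with hN
  set x : Fin m → ℕ := fun i => β i + α i with hx
  -- RHS is N!^m
  have hprodη : ∏ i, Nat.factorial (β i + η i) = N.factorial ^ m := by
    simp [hβ]
  -- sum of x is m * N
  have hsumβ : ∑ i, β i + l = m * N := by
    have : ∑ i, (β i + η i) = m * N := by
      simp [hβ, Finset.sum_const, Finset.card_fin, mul_comm]
    rw [Finset.sum_add_distrib, hη] at this
    exact this
  have hsum : ∑ i, x i = m * N := by
    rw [show ∑ i, x i = ∑ i, β i + ∑ i, α i from Finset.sum_add_distrib, hα, hsumβ]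
  set S1 := ∑ i, (x i - N) with hS1
  set S2 := ∑ i, (N - x i) with hS2
  have hS12 : S1 = S2 := by
    have key : (S1 : ℤ) - (S2 : ℤ) = 0 := by
      have h1 : (S1 : ℤ) - (S2 : ℤ) = ∑ i, ((x i : ℤ) - N) := by
        rw [hS1, hS2]
        push_cast
        rw [← Finset.sum_sub_distrib]
        refine Finset.sum_congr rfl fun i _ => ?_
        omega
      rw [h1, Finset.sum_sub_distrib]
      have h2 : (∑ i : Fin m, (x i : ℤ)) = (m : ℤ) * N := by
        exact_mod_cast congrArg (Nat.cast : ℕ → ℤ) hsum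
      rw [h2, Finset.sum_const, Finset.card_fin]
      push_cast
      ring
    omega
  -- there is j with x j ≠ N
  have hj : ∃ j, x j ≠ N := by
    by_contra h
    push_neg at h
    apply hne
    funext i
    have h1 := h i
    have h2 := hβ i
    simp only [hx] at h1
    omega
  have hS1pos : 1 ≤ S1 := by
    obtain ⟨j, hjne⟩ := hj
    rcases lt_or_gt_of_ne hjne with hlt | hgt
    · -- x j < N, so S2 ≥ 1
      rw [hS12, hS2]
      calc 1 ≤ N - x j := by omega
        _ ≤ ∑ i, (N - x i) := Finset.single_le_sum (f := fun i => N - x i)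
              (fun i _ => Nat.zero_le _) (Finset.mem_univ j)
    · rw [hS1]
      calc 1 ≤ x j - N := by omega
        _ ≤ ∑ i, (x i - N) := Finset.single_le_sum (f := fun i => x i - N)
              (fun i _ => Nat.zero_le _) (Finset.mem_univ j)
  -- main inequality
  have hmain : N.factorial ^ m * (N + 1) ^ S1 ≤ (∏ i, (x i).factorial) * N ^ S2 := by
    have := Finset.prod_le_prod' (s := Finset.univ)
      (f := fun i => N.factorial * (N + 1) ^ (x i - N))
      (g := fun i => (x i).factorial * N ^ (N - x i))
      (fun i _ => lemC (x i) N)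
    rwa [Finset.prod_mul_distrib, Finset.prod_mul_distrib, Finset.prod_const,
      Finset.card_fin, Finset.prod_pow_eq_pow_sum, Finset.prod_pow_eq_pow_sum,
      ← hS1, ← hS2] at this
  have hpowlt : N ^ S1 < (N + 1) ^ S1 :=
    Nat.pow_lt_pow_left (by omega) (by omega)
  have hfacpos : 0 < N.factorial ^ m := Nat.pow_pos N.factorial_pos
  have hfinal : N.factorial ^ m * N ^ S1 < (∏ i, (x i).factorial) * N ^ S1 := by
    calc N.factorial ^ m * N ^ S1 < N.factorial ^ m * (N + 1) ^ S1 :=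
          mul_lt_mul_of_pos_left hpowlt hfacpos
      _ ≤ (∏ i, (x i).factorial) * N ^ S2 := hmain
      _ = (∏ i, (x i).factorial) * N ^ S1 := by rw [hS12]
  have hNpow : 0 < N ^ S1 := Nat.pow_pos (by omega)
  have : N.factorial ^ m < ∏ i, (x i).factorial :=
    Nat.lt_of_mul_lt_mul_right hfinal
  rw [gt_iff_lt, hprodη]
  exact this
end

section
/- Let l, k, m be positive integers, let η ∈ ℤ₊^m with |η| = l, and let β = ((k+1+l), …, (k+1+l)) ∈ ℤ₊^m. Then for any α ∈ ℤ₊^m with |α| ≥ l and α ≠ η (so that β + α − η has nonnegative entries), one has (β + α − η)! > β!. -/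
lemma factA (a d : ℕ) : a.factorial * (a + 1) ^ d ≤ (a + d).factorial := by
  induction d with
  | zero => simp
  | succ n ih =>
    have h : a + (n + 1) = (a + n) + 1 := by ring
    rw [h, Nat.factorial_succ, pow_succ]
    calc a.factorial * ((a + 1) ^ n * (a + 1))
        = (a + 1) * (a.factorial * (a + 1) ^ n) := by ring
      _ ≤ (a + n + 1) * (a + n).factorial := Nat.mul_le_mul (by omega) ih

lemma factB (a d : ℕ) : (a + d).factorial ≤ a.factorial * (a + d) ^ d := by
  induction d with
  | zero => simp
  | succ n ih =>
    have h : a + (n + 1) = (a + n) + 1 := by ring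
    rw [h, Nat.factorial_succ]
    calc (a + n + 1) * (a + n).factorial
        ≤ (a + n + 1) * (a.factorial * (a + n) ^ n) := Nat.mul_le_mul_left _ ih
      _ ≤ (a + n + 1) * (a.factorial * (a + n + 1) ^ n) := by
          exact Nat.mul_le_mul_left _ (Nat.mul_le_mul_left _ (Nat.pow_le_pow_left (by omega) n))
      _ = a.factorial * (a + n + 1) ^ (n + 1) := by ring

theorem stmt_1 (m l k : ℕ) (hm : 0 < m) (hl : 0 < l) (hk : 0 < k)
    (η : Fin m → ℕ) (hη : ∑ i, η i = l)
    (β : Fin m → ℕ) (hβ : ∀ i, β i = k + 1 + l) :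
    ∀ α : Fin m → ℕ, l ≤ ∑ i, α i → α ≠ η →
      ∏ i, Nat.factorial (β i + α i - η i) > ∏ i, Nat.factorial (β i) := by
  intro α hα hne
  set B := k + 1 + l with hB
  have hηle : ∀ i, η i ≤ l := fun i =>
    hη ▸ Finset.single_le_sum (fun j _ => Nat.zero_le _) (Finset.mem_univ i)
  have hex : ∃ i, η i < α i := by
    by_contra h
    push_neg at h
    obtain ⟨j, hj⟩ : ∃ j, α j ≠ η j := by
      by_contra h2; push_neg at h2; exact hne (funext h2)
    have : ∑ i, α i < ∑ i, η i :=
      Finset.sum_lt_sum (fun i _ => h i) ⟨j, Finset.mem_univ j, lt_of_le_of_ne (h j) hj⟩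
    omega
  set e : Fin m → ℕ := fun i => α i - η i with he
  set d : Fin m → ℕ := fun i => η i - α i with hd
  have key : ∀ i, (β i).factorial * (B + 1) ^ (e i) ≤
      (β i + α i - η i).factorial * B ^ (d i) := by
    intro i
    have hβi := hβ i
    rcases le_or_gt (η i) (α i) with h | h
    · have hd0 : d i = 0 := by simp [hd]; omega
      have hc : β i + α i - η i = β i + e i := by simp [he]; omega
      rw [hd0, hc, pow_zero, mul_one, hβi]
      exact factA B (e i)
    · have he0 : e i = 0 := by simp [he]; omega
      have hdle : d i ≤ B := by have := hηle i; simp [hd, hB]; omega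
      have hc : β i + α i - η i = B - d i := by simp [hd]; omega
      rw [he0, hc, pow_zero, mul_one, hβi]
      have := factB (B - d i) (d i)
      have hbd : B - d i + d i = B := by omega
      rw [hbd] at this
      exact this
  have prod_key : (∏ i, (β i).factorial) * (B + 1) ^ (∑ i, e i) ≤
      (∏ i, (β i + α i - η i).factorial) * B ^ (∑ i, d i) := by
    rw [← Finset.prod_pow_eq_pow_sum, ← Finset.prod_pow_eq_pow_sum,
      ← Finset.prod_mul_distrib, ← Finset.prod_mul_distrib]
    exact Finset.prod_le_prod (fun i _ => Nat.zero_le _) (fun i _ => key i)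
  set P := ∑ i, e i with hP
  set N := ∑ i, d i with hN
  have hsum : ∑ i, α i + N = ∑ i, η i + P := by
    rw [hP, hN, ← Finset.sum_add_distrib, ← Finset.sum_add_distrib]
    exact Finset.sum_congr rfl (fun i _ => by simp [he, hd]; omega)
  have hNP : N ≤ P := by omega
  have hP1 : 1 ≤ P := by
    obtain ⟨i, hi⟩ := hex
    have : e i ≤ P := Finset.single_le_sum (fun j _ => Nat.zero_le _) (Finset.mem_univ i)
    have : 1 ≤ e i := by simp [he]; omega
    omega
  have hpow : B ^ N < (B + 1) ^ P := by
    rcases Nat.eq_zero_or_pos N with h0 | hpos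
    · rw [h0, pow_zero]
      calc 1 < B + 1 := by omega
        _ ≤ (B + 1) ^ P := Nat.le_self_pow (by omega) _
    · calc B ^ N < (B + 1) ^ N := Nat.pow_lt_pow_left (by omega) (by omega)
        _ ≤ (B + 1) ^ P := Nat.pow_le_pow_right (by omega) hNP
  have hβpos : 0 < ∏ i, (β i).factorial :=
    Finset.prod_pos (fun i _ => Nat.factorial_pos _)
  have final : (∏ i, (β i).factorial) * B ^ N <
      (∏ i, (β i + α i - η i).factorial) * B ^ N := by
    calc (∏ i, (β i).factorial) * B ^ N
        < (∏ i, (β i).factorial) * (B + 1) ^ P := by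
          exact (Nat.mul_lt_mul_left hβpos).mpr hpow
      _ ≤ (∏ i, (β i + α i - η i).factorial) * B ^ N := prod_key
  exact Nat.lt_of_mul_lt_mul_right final
end

section
/- Let k, l ≥ 0 and m ≥ 1 be integers, and let η, α ∈ ℤ₊^m with |η| = l and either |α| ≥ l+1 or |α| = l with α ≠ η. Set N = k + l + 2, and let ξ_γ = ((|γ|!)^{γ!})^{−1}. Then ξ_{Nε + α − η} / ξ_{Nε} = (|Nε|!)^{(Nε)!} / (|Nε + α − η|!)^{(Nε + α − η)!} ≤ 1/((k+1)! · α!). -/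
open Finset

private lemma aux1 (N c : ℕ) : N.factorial * (N + 1) ^ c ≤ (N + c).factorial := by
  induction c with
  | zero => simp
  | succ c ih =>
    have h1 : N.factorial * (N + 1) ^ (c + 1) = N.factorial * (N + 1) ^ c * (N + 1) := by ring
    rw [h1, show N + (c + 1) = (N + c) + 1 from rfl, Nat.factorial_succ]
    calc N.factorial * (N + 1) ^ c * (N + 1) ≤ (N + c).factorial * (N + c + 1) :=
          Nat.mul_le_mul ih (by omega)
      _ = (N + c + 1) * (N + c).factorial := mul_comm _ _

private lemma aux2 (b c : ℕ) : (b + c).factorial ≤ b.factorial * (b + c) ^ c := by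
  induction c with
  | zero => simp
  | succ c ih =>
    rw [show b + (c + 1) = (b + c) + 1 from rfl, Nat.factorial_succ]
    calc (b + c + 1) * (b + c).factorial ≤ (b + c + 1) * (b.factorial * (b + c) ^ c) :=
          Nat.mul_le_mul (le_refl _) ih
      _ = b.factorial * ((b + c + 1) * (b + c) ^ c) := by ring
      _ ≤ b.factorial * ((b + c + 1) * (b + c + 1) ^ c) :=
          Nat.mul_le_mul (le_refl _) (Nat.mul_le_mul (le_refl _) (Nat.pow_le_pow_left (by omega) c))
      _ = b.factorial * (b + c + 1) ^ (c + 1) := by rw [pow_succ]; ring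

private lemma fac_key (N b : ℕ) :
    N.factorial * (N + 1) ^ (b - N) ≤ b.factorial * N ^ (N - b) := by
  rcases le_total N b with h | h
  · obtain ⟨c, rfl⟩ := Nat.exists_eq_add_of_le h
    have : N + c - N = c := by omega
    rw [this, show N - (N + c) = 0 by omega, pow_zero, mul_one]
    exact aux1 N c
  · obtain ⟨c, rfl⟩ := Nat.exists_eq_add_of_le h
    rw [show b - (b + c) = 0 by omega, pow_zero, mul_one, show b + c - b = c by omega]
    exact aux2 b c

private lemma main_nat (m N : ℕ) (hN : 1 ≤ N) (b : Fin m → ℕ)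
    (hsum : m * N ≤ ∑ i, b i) (hne : ∃ i, b i ≠ N) :
    (N.factorial) ^ m < ∏ i, (b i).factorial := by
  set A := ∑ i, (b i - N) with hA
  set B := ∑ i, (N - b i) with hB
  have h1 : (N.factorial) ^ m * (N + 1) ^ A = ∏ i, (N.factorial * (N + 1) ^ (b i - N)) := by
    rw [Finset.prod_mul_distrib, Finset.prod_const, Finset.prod_pow_eq_pow_sum]
    simp [hA]
  have h2 : (∏ i, (b i).factorial) * N ^ B = ∏ i, ((b i).factorial * N ^ (N - b i)) := by
    rw [Finset.prod_mul_distrib, Finset.prod_pow_eq_pow_sum]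
  have hprod : (N.factorial) ^ m * (N + 1) ^ A ≤ (∏ i, (b i).factorial) * N ^ B := by
    rw [h1, h2]
    exact Finset.prod_le_prod' (fun i _ => fac_key N (b i))
  have hBA : B + ∑ i, b i = A + m * N := by
    have h := Finset.sum_congr rfl (fun i (_ : i ∈ (univ : Finset (Fin m))) =>
      (by omega : (N - b i) + b i = (b i - N) + N))
    simpa [Finset.sum_add_distrib, Finset.sum_const, Finset.card_univ, hA, hB, mul_comm]
      using h
  have hBleA : B ≤ A := by omega
  have hbase : N ^ B < (N + 1) ^ A := by
    by_cases hB0 : B = 0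
    · have hA0 : A ≠ 0 := by
        intro hA0
        obtain ⟨i, hi⟩ := hne
        have h3 : ∀ j ∈ (univ : Finset (Fin m)), b j - N = 0 :=
          (Finset.sum_eq_zero_iff).mp (show ∑ x, (b x - N) = 0 from hA0)
        have h4 : ∀ j ∈ (univ : Finset (Fin m)), N - b j = 0 :=
          (Finset.sum_eq_zero_iff).mp (show ∑ x, (N - b x) = 0 from hB0)
        have := h3 i (mem_univ i); have := h4 i (mem_univ i)
        omega
      rw [hB0, pow_zero]
      exact Nat.one_lt_pow hA0 (by omega)
    · calc N ^ B < (N + 1) ^ B := Nat.pow_lt_pow_left (by omega) hB0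
        _ ≤ (N + 1) ^ A := Nat.pow_le_pow_right (by omega) hBleA
  have hfinal : (N.factorial) ^ m * N ^ B < (∏ i, (b i).factorial) * N ^ B :=
    lt_of_lt_of_le ((Nat.mul_lt_mul_left (pow_pos N.factorial_pos m)).mpr hbase) hprod
  exact lt_of_mul_lt_mul_right hfinal (Nat.zero_le _)

private lemma final_real (x y d : ℝ) (E P : ℕ) (hx : 0 ≤ x) (hxy : x ≤ y) (hy : 1 ≤ y)
    (hEP : E < P) (hd0 : 0 < d) (hdy : d ≤ y) : x ^ E / y ^ P ≤ 1 / d := by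
  have hy0 : 0 < y := lt_of_lt_of_le one_pos hy
  have hyP : 0 < y ^ P := pow_pos hy0 P
  have h1 : x ^ E / y ^ P ≤ y ^ E / y ^ P :=
    div_le_div_of_nonneg_right (pow_le_pow_left₀ hx hxy E) hyP.le
  have h2 : y ^ E / y ^ P = 1 / y ^ (P - E) := by
    rw [show P = E + (P - E) by omega, pow_add]
    field_simp
    congr 1; omega
  have h3 : d ≤ y ^ (P - E) := by
    calc d ≤ y := hdy
      _ ≤ y ^ (P - E) := le_self_pow₀ hy (by omega)
  calc x ^ E / y ^ P ≤ y ^ E / y ^ P := h1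
    _ = 1 / y ^ (P - E) := h2
    _ ≤ 1 / d := one_div_le_one_div_of_le hd0 h3

theorem stmt_7 (m k l : ℕ) (hm : 1 ≤ m)
    (η α : Fin m → ℕ) (hη : ∑ i, η i = l)
    (hα : (l + 1 ≤ ∑ i, α i) ∨ (∑ i, α i = l ∧ α ≠ η))
    (N : ℕ) (hN : N = k + l + 2) :
    ((Nat.factorial (m * N) : ℝ)) ^ ((Nat.factorial N) ^ m) /
      ((Nat.factorial (∑ i, (N + α i - η i)) : ℝ)) ^ (∏ i, Nat.factorial (N + α i - η i))
      ≤ 1 / ((Nat.factorial (k + 1) : ℝ) * ∏ i, (Nat.factorial (α i) : ℝ)) := by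
  have hηle : ∀ i, η i ≤ l := fun i =>
    hη ▸ Finset.single_le_sum (fun j _ => Nat.zero_le (η j)) (mem_univ i)
  have hS : (∑ i, (N + α i - η i)) + l = m * N + ∑ i, α i := by
    have h := Finset.sum_congr rfl (fun i (_ : i ∈ (univ : Finset (Fin m))) =>
      (by have := hηle i; omega : (N + α i - η i) + η i = N + α i))
    simpa [Finset.sum_add_distrib, hη, Finset.sum_const, Finset.card_univ, mul_comm] using h
  have ha : l ≤ ∑ i, α i := by rcases hα with h | ⟨h, _⟩ <;> omega
  have hmN : N ≤ m * N := Nat.le_mul_of_pos_left N (by omega)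
  have hsum_ge : m * N ≤ ∑ i, (N + α i - η i) := by omega
  have hne : ∃ i, (N + α i - η i) ≠ N := by
    rcases hα with h | ⟨h1, h2⟩
    · by_contra hc
      push_neg at hc
      have : ∑ i, (N + α i - η i) = ∑ i, N := Finset.sum_congr rfl (fun i _ => hc i)
      simp [Finset.sum_const, Finset.card_univ, mul_comm] at this
      omega
    · obtain ⟨i, hi⟩ := Function.ne_iff.mp h2
      exact ⟨i, by have := hηle i; omega⟩
  have hP : (N.factorial) ^ m < ∏ i, (N + α i - η i).factorial :=
    main_nat m N (by omega) (fun i => N + α i - η i) hsum_ge hne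
  have hSge : k + 1 + (∑ i, α i) + 1 ≤ ∑ i, (N + α i - η i) := by omega
  have hfac1 : (∏ i, (α i).factorial) ≤ (∑ i, α i).factorial :=
    Nat.le_of_dvd (∑ i, α i).factorial_pos (Nat.prod_factorial_dvd_factorial_sum _ _)
  have hfac2 : (k + 1).factorial * (∑ i, α i).factorial ≤ (k + 1 + ∑ i, α i).factorial :=
    Nat.le_of_dvd (Nat.factorial_pos _) (Nat.factorial_mul_factorial_dvd_factorial_add _ _)
  have hdenom : (k + 1).factorial * ∏ i, (α i).factorial ≤
      (∑ i, (N + α i - η i)).factorial := by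
    calc (k + 1).factorial * ∏ i, (α i).factorial
        ≤ (k + 1).factorial * (∑ i, α i).factorial := Nat.mul_le_mul_left _ hfac1
      _ ≤ (k + 1 + ∑ i, α i).factorial := hfac2
      _ ≤ (∑ i, (N + α i - η i)).factorial := Nat.factorial_le (by omega)
  apply final_real
  · positivity
  · exact_mod_cast Nat.factorial_le hsum_ge
  · exact_mod_cast (Nat.factorial_pos _)
  · exact hP
  · positivity
  · exact_mod_cast hdenom
end

section
/- Let H be a complex separable Hilbert space and T = (T₁,…,T_m) a commuting tuple of bounded operators on H. Suppose there exists a holomorphic map γ : Ω → H on a bounded neighborhood Ω of 0 in ℂ^m with γ(z) ∈ ⋂_i ker(T_i − z_i) for all z ∈ Ω, such that span{γ(z) : z ∈ Ω} is dense in H. Then T is cyclic: there exists f ∈ H such that span{T^α f : α ∈ ℤ₊^m} is dense in H. -/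
noncomputable section

namespace Stmt10Aux
open MvPolynomial

open MvPolynomial

lemma exists_interp {m : ℕ} (v : ℕ → Fin m → ℂ) (hinj : Function.Injective v) (J k : ℕ) :
    ∃ p : MvPolynomial (Fin m) ℂ,
      ∀ j ≤ J, MvPolynomial.eval (v j) p = if j = k then 1 else 0 := by
  classical
  have hq : ∀ j : ℕ, ∃ q : MvPolynomial (Fin m) ℂ,
      j ≠ k → MvPolynomial.eval (v k) q = 1 ∧ MvPolynomial.eval (v j) q = 0 := by
    intro j
    by_cases hj : j = k
    · exact ⟨1, fun h => absurd hj h⟩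
    · have hne : v j ≠ v k := fun h => hj (hinj h)
      obtain ⟨i, hi⟩ := Function.ne_iff.mp hne
      have hsub : v k i - v j i ≠ 0 := sub_ne_zero.mpr (Ne.symm hi)
      refine ⟨MvPolynomial.C ((v k i - v j i)⁻¹) * (MvPolynomial.X i - MvPolynomial.C (v j i)),
        fun _ => ⟨?_, ?_⟩⟩
      · simp [inv_mul_cancel₀ hsub]
      · simp
  choose q hq using hq
  refine ⟨∏ j ∈ (Finset.range (J + 1)).erase k, q j, ?_⟩
  intro j hj
  by_cases hjk : j = k
  · subst hjk
    rw [if_pos rfl, map_prod]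
    exact Finset.prod_eq_one fun x hx => (hq x (Finset.ne_of_mem_erase hx)).1
  · rw [if_neg hjk, map_prod]
    exact Finset.prod_eq_zero
      (Finset.mem_erase.mpr ⟨hjk, Finset.mem_range.mpr (Nat.lt_succ_of_le hj)⟩) (hq j hjk).2

lemma exists_bound {m : ℕ} (R : ℝ) (p : MvPolynomial (Fin m) ℂ) :
    ∃ B : ℝ, 1 ≤ B ∧ ∀ z : Fin m → ℂ, ‖z‖ ≤ R → ‖MvPolynomial.eval z p‖ ≤ B := by
  obtain ⟨B0, hB0⟩ := (isCompact_closedBall (0 : Fin m → ℂ) R).exists_bound_of_continuousOn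
      (MvPolynomial.continuous_eval p).continuousOn
  refine ⟨max B0 1, le_max_right _ _, fun z hz => ?_⟩
  exact le_trans (hB0 z (by simpa [Metric.mem_closedBall, dist_zero_right] using hz))
    (le_max_left _ _)



lemma listprod_eigen {H : Type*} [NormedAddCommGroup H] [NormedSpace ℂ H] :
    ∀ (n : ℕ) (g : Fin n → H →L[ℂ] H) (c : Fin n → ℂ) (x : H),
      (∀ i, g i x = c i • x) → (List.ofFn g).prod x = (∏ i, c i) • x := by
  intro n
  induction n with
  | zero => intro g c x _; simp
  | succ n ih =>
    intro g c x hx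
    rw [List.ofFn_succ, List.prod_cons, ContinuousLinearMap.mul_apply,
      ih (fun i => g i.succ) (fun i => c i.succ) x (fun i => hx i.succ), map_smul, hx 0,
      smul_smul, Fin.prod_univ_succ, mul_comm]

lemma prod_pow_norm_le {m : ℕ} (z : Fin m → ℂ) (R : ℝ)
    (h : ∀ i, ‖z i‖ ≤ R) (α : Fin m → ℕ) :
    ‖∏ i, z i ^ α i‖ ≤ R ^ (∑ i, α i) := by
  calc ‖∏ i, z i ^ α i‖ = ∏ i, ‖z i‖ ^ α i := by simp [norm_prod, norm_pow]
    _ ≤ ∏ i, R ^ α i := Finset.prod_le_prod (fun _ _ => pow_nonneg (norm_nonneg _) _)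
        (fun i _ => pow_le_pow_left₀ (norm_nonneg _) (h i) _)
    _ = R ^ (∑ i, α i) := by rw [Finset.prod_pow_eq_pow_sum]


set_option maxHeartbeats 1000000 in
lemma rigidity {m : ℕ} (v : ℕ → Fin m → ℂ) (hinj : Function.Injective v)
    (R : ℝ) (hR : ∀ j, ‖v j‖ ≤ R) :
    ∃ ε : ℕ → ℝ, (∀ j, 0 < ε j) ∧ (∀ j, ε j ≤ (1/2 : ℝ) ^ j) ∧
      ∀ (C : ℝ) (d : ℕ → ℂ), (∀ j, ‖d j‖ ≤ C * ε j) →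
        (∀ α : Fin m → ℕ, ∑' j, d j * ∏ i, (v j i) ^ (α i) = 0) →
        ∀ k, d k = 0 := by
  classical
  have hR0 : 0 ≤ R := le_trans (norm_nonneg _) (hR 0)
  set P : ℕ → ℕ → MvPolynomial (Fin m) ℂ :=
    fun J k => Classical.choose (exists_interp v hinj J k) with hPdef
  have hP : ∀ J k, ∀ j ≤ J, MvPolynomial.eval (v j) (P J k) = if j = k then 1 else 0 :=
    fun J k => Classical.choose_spec (exists_interp v hinj J k)
  set B : MvPolynomial (Fin m) ℂ → ℝ := fun p => Classical.choose (exists_bound R p) with hBdef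
  have hB1 : ∀ p, 1 ≤ B p := fun p => (Classical.choose_spec (exists_bound R p)).1
  have hB : ∀ p, ∀ z : Fin m → ℂ, ‖z‖ ≤ R → ‖MvPolynomial.eval z p‖ ≤ B p :=
    fun p => (Classical.choose_spec (exists_bound R p)).2
  set A : ℕ → ℝ :=
    fun J => (Finset.range (J+1)).sup' Finset.nonempty_range_add_one (fun k => B (P J k)) with hAdef
  have hA1 : ∀ J, ∀ k ≤ J, B (P J k) ≤ A J := fun J k hk =>
    Finset.le_sup' (fun k => B (P J k)) (Finset.mem_range.mpr (Nat.lt_succ_of_le hk))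
  set G : ℕ → ℝ := fun J => (Finset.range (J+1)).sup' Finset.nonempty_range_add_one A with hGdef
  have hAG : ∀ J, A J ≤ G J := fun J =>
    Finset.le_sup' A (Finset.mem_range.mpr (Nat.lt_succ_self J))
  have hG1 : ∀ J, 1 ≤ G J := fun J => le_trans (le_trans (hB1 _) (hA1 J 0 (Nat.zero_le J))) (hAG J)
  have hG0 : ∀ J, 0 < G J := fun J => lt_of_lt_of_le one_pos (hG1 J)
  have hGmono : ∀ I J, I ≤ J → G I ≤ G J := by
    intro I J hIJ
    exact Finset.sup'_mono A (Finset.range_subset_range.mpr (Nat.succ_le_succ hIJ)) _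
  set ε : ℕ → ℝ := fun j => (1/2 : ℝ)^j / G j with hεdef
  have hεpos : ∀ j, 0 < ε j := fun j => div_pos (pow_pos (by norm_num) j) (hG0 j)
  have hεle : ∀ j, ε j ≤ (1/2 : ℝ)^j := fun j =>
    div_le_self (pow_nonneg (by norm_num) j) (hG1 j)
  refine ⟨ε, hεpos, hεle, ?_⟩
  intro C d hd hmom k
  have hC0 : 0 ≤ C := by
    by_contra h
    push_neg at h
    have := hd 0
    nlinarith [norm_nonneg (d 0), hεpos 0]
  have hhalf : Summable (fun j : ℕ => (1/2 : ℝ)^j) :=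
    summable_geometric_of_lt_one (by norm_num) (by norm_num)
  have hdsum : Summable (fun j => ‖d j‖) := by
    refine Summable.of_nonneg_of_le (fun _ => norm_nonneg _) (fun j => ?_) (hhalf.mul_left C)
    exact le_trans (hd j) (mul_le_mul_of_nonneg_left (hεle j) hC0)
  have key : ∀ J, k ≤ J → ‖d k‖ ≤ C * (1/2 : ℝ)^J := by
    intro J hkJ
    set p := P J k with hp
    have hevb : ∀ j, ‖MvPolynomial.eval (v j) p‖ ≤ B p := fun j => hB p (v j) (hR j)
    have hgnorm : Summable (fun j => ‖d j‖ * B p) := hdsum.mul_right (B p)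
    have hgsum : Summable (fun j => d j * MvPolynomial.eval (v j) p) := by
      apply Summable.of_norm
      refine Summable.of_nonneg_of_le (fun _ => norm_nonneg _) (fun j => ?_) hgnorm
      rw [norm_mul]
      exact mul_le_mul_of_nonneg_left (hevb j) (norm_nonneg _)
    have hsummom : ∀ α : Fin m → ℕ, Summable (fun j => d j * ∏ i, (v j i)^(α i)) := by
      intro α
      apply Summable.of_norm
      refine Summable.of_nonneg_of_le (fun _ => norm_nonneg _) (fun j => ?_)
        (hdsum.mul_right (R ^ (∑ i, α i)))
      rw [norm_mul]
      refine mul_le_mul_of_nonneg_left ?_ (norm_nonneg _)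
      calc ‖∏ i, (v j i)^(α i)‖ = ∏ i, ‖v j i‖^(α i) := by simp [norm_prod, norm_pow]
        _ ≤ ∏ i, R^(α i) := Finset.prod_le_prod (fun _ _ => pow_nonneg (norm_nonneg _) _)
              (fun i _ => pow_le_pow_left₀ (norm_nonneg _)
                (le_trans (norm_le_pi_norm (v j) i) (hR j)) _)
        _ = R ^ (∑ i, α i) := by rw [Finset.prod_pow_eq_pow_sum]
    have htot : ∑' j, d j * MvPolynomial.eval (v j) p = 0 := by
      calc ∑' j, d j * MvPolynomial.eval (v j) p
          = ∑' j, ∑ α ∈ p.support, MvPolynomial.coeff α p * (d j * ∏ i, (v j i) ^ (α i)) := by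
            refine tsum_congr fun j => ?_
            rw [MvPolynomial.eval_eq', Finset.mul_sum]
            exact Finset.sum_congr rfl fun α _ => by ring
        _ = ∑ α ∈ p.support, ∑' j, MvPolynomial.coeff α p * (d j * ∏ i, (v j i) ^ (α i)) :=
            Summable.tsum_finsetSum fun α _ => (hsummom ⇑α).mul_left _
        _ = 0 := Finset.sum_eq_zero fun α _ => by rw [tsum_mul_left, hmom ⇑α, mul_zero]
    have hsplit := Summable.sum_add_tsum_nat_add (f := fun j => d j * MvPolynomial.eval (v j) p) (J+1) hgsum
    have hhead : ∑ j ∈ Finset.range (J+1), d j * MvPolynomial.eval (v j) p = d k := by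
      have h1 : ∀ j ∈ Finset.range (J+1),
          d j * MvPolynomial.eval (v j) p = if j = k then d j else 0 := by
        intro j hj
        rw [hP J k j (Nat.lt_succ_iff.mp (Finset.mem_range.mp hj))]
        split <;> simp
      rw [Finset.sum_congr rfl h1, Finset.sum_ite_eq' (Finset.range (J+1)) k,
        if_pos (Finset.mem_range.mpr (Nat.lt_succ_of_le hkJ))]
    have htail : d k = - ∑' j, d (j + (J+1)) * MvPolynomial.eval (v (j + (J+1))) p := by
      rw [htot, hhead] at hsplit
      exact eq_neg_of_add_eq_zero_left hsplit
    have htailsum : Summable (fun j => ‖d (j + (J+1)) * MvPolynomial.eval (v (j + (J+1))) p‖) := by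
      have : Summable (fun j => ‖d j * MvPolynomial.eval (v j) p‖) := hgsum.norm
      exact (summable_nat_add_iff (J+1)).mpr this
    have hRHSsum : Summable (fun j : ℕ => C * B p / G J * (1/2:ℝ)^(j + (J+1))) := by
      simpa [pow_add] using (hhalf.mul_right ((1/2:ℝ)^(J+1))).mul_left (C * B p / G J)
    have hnorm : ‖d k‖ ≤ ∑' j, C * B p / G J * (1/2:ℝ)^(j + (J+1)) := by
      rw [htail, norm_neg]
      refine le_trans (norm_tsum_le_tsum_norm htailsum) (Summable.tsum_le_tsum (fun j => ?_) htailsum hRHSsum)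
      rw [norm_mul]
      have h2 : ‖d (j + (J+1))‖ ≤ C * ((1/2:ℝ)^(j+(J+1)) / G J) := by
        refine le_trans (hd _) (mul_le_mul_of_nonneg_left ?_ hC0)
        have : G J ≤ G (j + (J+1)) := hGmono _ _ (by omega)
        exact div_le_div_of_nonneg_left (pow_nonneg (by norm_num) _) (hG0 J) this
      calc ‖d (j + (J+1))‖ * ‖MvPolynomial.eval (v (j + (J+1))) p‖
          ≤ (C * ((1/2:ℝ)^(j+(J+1)) / G J)) * B p := by
            refine mul_le_mul h2 (hevb _) (norm_nonneg _) (mul_nonneg hC0 (div_nonneg (by positivity) (hG0 J).le))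
        _ = C * B p / G J * (1/2:ℝ)^(j + (J+1)) := by ring
    have hgeo : ∑' j : ℕ, (1/2:ℝ)^(j + (J+1)) = (1/2:ℝ)^J := by
      have : ∀ j : ℕ, (1/2:ℝ)^(j + (J+1)) = (1/2:ℝ)^(J+1) * (1/2:ℝ)^j := fun j => by
        rw [pow_add]; ring
      rw [tsum_congr this, tsum_mul_left, tsum_geometric_of_lt_one (by norm_num) (by norm_num)]
      ring
    have hBG : B p / G J ≤ 1 := (div_le_one (hG0 J)).mpr (le_trans (hA1 J k hkJ) (hAG J))
    have : ∑' j, C * B p / G J * (1/2:ℝ)^(j + (J+1)) = C * (B p / G J) * (1/2:ℝ)^J := by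
      rw [tsum_mul_left, hgeo]; ring
    rw [this] at hnorm
    refine le_trans hnorm ?_
    have hhp : (0:ℝ) ≤ (1/2:ℝ)^J := pow_nonneg (by norm_num) J
    nlinarith [mul_nonneg hC0 hhp]
  have hlim : Filter.Tendsto (fun J : ℕ => C * (1/2:ℝ)^J) Filter.atTop (nhds 0) := by
    simpa using (tendsto_pow_atTop_nhds_zero_of_lt_one (by norm_num : (0:ℝ) ≤ 1/2)
      (by norm_num)).const_mul C
  have hle0 : ‖d k‖ ≤ 0 :=
    ge_of_tendsto hlim (Filter.eventually_atTop.mpr ⟨k, fun J hJ => key J hJ⟩)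
  exact norm_le_zero_iff.mp hle0


end Stmt10Aux

open Stmt10Aux in
set_option maxHeartbeats 1000000 in
theorem stmt_10 (m : ℕ) {H : Type*} [NormedAddCommGroup H] [InnerProductSpace ℂ H]
    [CompleteSpace H] [SecondCountableTopology H]
    (T : Fin m → H →L[ℂ] H) (hcomm : ∀ i j, Commute (T i) (T j))
    (Ω : Set (Fin m → ℂ)) (hopen : IsOpen Ω) (h0 : (0 : Fin m → ℂ) ∈ Ω)
    (hbdd : Bornology.IsBounded Ω)
    (γ : (Fin m → ℂ) → H) (hγ : DifferentiableOn ℂ γ Ω)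
    (heig : ∀ z ∈ Ω, ∀ i, (T i) (γ z) = z i • γ z)
    (hspan : Dense (Submodule.span ℂ (γ '' Ω) : Set H)) :
    ∃ f : H, Dense
      ((Submodule.span ℂ
        {x : H | ∃ α : Fin m → ℕ, x = (List.ofFn (fun i => (T i) ^ (α i))).prod f}) : Set H) := by
  classical
  -- trivial case m = 0
  by_cases hm : m = 0
  · subst hm
    refine ⟨γ 0, ?_⟩
    have hset : {x : H | ∃ α : Fin 0 → ℕ, x = (List.ofFn (fun i => (T i) ^ (α i))).prod (γ 0)}
        = {γ 0} := by
      ext x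
      simp [List.ofFn_zero]
    have hΩ : Ω = {0} :=
      Set.eq_singleton_iff_unique_mem.mpr ⟨h0, fun z _ => funext fun i => i.elim0⟩
    have himg : γ '' Ω = {γ 0} := by rw [hΩ, Set.image_singleton]
    rw [hset, ← himg]
    exact hspan
  -- main case
  have i0 : Fin m := ⟨0, Nat.pos_of_ne_zero hm⟩
  obtain ⟨R, hR⟩ := hbdd.subset_closedBall 0
  -- countable dense subset of Ω
  obtain ⟨s, hsc, hsd⟩ := TopologicalSpace.exists_countable_dense ↥Ω
  set t : Set (Fin m → ℂ) := Subtype.val '' s with htdef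
  have htΩ : t ⊆ Ω := by rintro x ⟨y, _, rfl⟩; exact y.2
  have htc : t.Countable := hsc.image _
  have htcl : ∀ z ∈ Ω, z ∈ closure t := fun z hz => closure_subtype.mp (hsd ⟨z, hz⟩)
  -- Ω is infinite
  obtain ⟨δ, hδpos, hδ⟩ := Metric.isOpen_iff.mp hopen 0 h0
  have hΩinf : Ω.Infinite := by
    set g : ℕ → Fin m → ℂ := fun n => Pi.single i0 ((δ / (n + 2) : ℝ) : ℂ) with hgdef
    have hginj : Function.Injective g := by
      intro a b hab
      have h1 := congrFun hab i0
      simp only [hgdef, Pi.single_eq_same, Complex.ofReal_inj] at h1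
      have h2 : (a:ℝ) = b := by
        have ha : ((a:ℝ) + 2) ≠ 0 := by positivity
        have hb : ((b:ℝ) + 2) ≠ 0 := by positivity
        rw [div_eq_div_iff ha hb] at h1
        have h3 := mul_left_cancel₀ hδpos.ne' h1
        linarith
      exact_mod_cast h2
    have hgmem : ∀ n, g n ∈ Ω := by
      intro n
      apply hδ
      rw [Metric.mem_ball, dist_zero_right]
      have h2 : ‖g n‖ ≤ δ / 2 := by
        apply pi_norm_le_iff_of_nonneg (by positivity) |>.mpr
        intro i
        rcases eq_or_ne i i0 with h | h
        · subst h
          simp only [hgdef, Pi.single_eq_same, Complex.norm_real, Real.norm_eq_abs]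
          rw [abs_of_pos (by positivity), div_le_div_iff₀ (by positivity) (by norm_num)]
          nlinarith
        · simp only [hgdef, Pi.single_eq_of_ne h, norm_zero]
          positivity
      linarith
    exact Set.infinite_of_injective_forall_mem hginj hgmem
  have htinf : t.Infinite := by
    intro hf
    have : Ω ⊆ t := fun z hz => by
      have := htcl z hz
      rwa [hf.isClosed.closure_eq] at this
    exact hΩinf (hf.subset this)
  -- enumerate t
  have _ : Countable ↥t := htc.to_subtype
  have _ : Infinite ↥t := htinf.to_subtype
  obtain ⟨num⟩ := nonempty_denumerable ↥t
  set e : ↥t ≃ ℕ := Denumerable.eqv ↥t with hedef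
  set w : ℕ → Fin m → ℂ := fun n => (e.symm n : Fin m → ℂ) with hwdef
  have hwinj : Function.Injective w := Subtype.val_injective.comp e.symm.injective
  have hwt : ∀ n, w n ∈ t := fun n => (e.symm n).2
  have hwΩ : ∀ n, w n ∈ Ω := fun n => htΩ (hwt n)
  have hrange : t ⊆ Set.range w := by
    intro x hx
    exact ⟨e ⟨x, hx⟩, by rw [hwdef]; simp⟩
  have hwR : ∀ n, ‖w n‖ ≤ R := fun n => mem_closedBall_zero_iff.mp (hR (hwΩ n))
  have hwRi : ∀ n i, ‖w n i‖ ≤ R := fun n i => le_trans (norm_le_pi_norm (w n) i) (hwR n)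
  have hR0 : 0 ≤ R := le_trans (norm_nonneg _) (hwR 0)
  -- eigenvalue computations
  have hpow : ∀ z ∈ Ω, ∀ (i : Fin m) (n : ℕ), (T i ^ n) (γ z) = (z i ^ n) • γ z := by
    intro z hz i n
    induction n with
    | zero => simp
    | succ n ih =>
      rw [pow_succ, ContinuousLinearMap.mul_apply, heig z hz i, map_smul, ih, smul_smul,
        pow_succ']
  have hlist : ∀ z ∈ Ω, ∀ α : Fin m → ℕ,
      (List.ofFn fun i => T i ^ α i).prod (γ z) = (∏ i, z i ^ α i) • γ z := fun z hz α =>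
    listprod_eigen m (fun i => T i ^ α i) (fun i => z i ^ α i) (γ z) (fun i => hpow z hz i (α i))
  -- weights
  obtain ⟨ε, hεpos, hεle, hrig⟩ := rigidity w hwinj R hwR
  set c : ℕ → ℝ := fun j => ε j / (1 + ‖γ (w j)‖) with hcdef
  have hcpos : ∀ j, 0 < c j := fun j => div_pos (hεpos j) (by positivity)
  have hcγ : ∀ j, c j * ‖γ (w j)‖ ≤ ε j := by
    intro j
    have h1 : 0 < 1 + ‖γ (w j)‖ := by positivity
    rw [hcdef]
    rw [div_mul_eq_mul_div, div_le_iff₀ h1]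
    nlinarith [norm_nonneg (γ (w j)), (hεpos j).le]
  have hhalf : Summable (fun j : ℕ => (1/2 : ℝ)^j) :=
    summable_geometric_of_lt_one (by norm_num) (by norm_num)
  have hnrm : ∀ j, ‖(c j : ℂ) • γ (w j)‖ ≤ ε j := by
    intro j
    rw [norm_smul, Complex.norm_real, Real.norm_eq_abs, abs_of_pos (hcpos j)]
    exact hcγ j
  have hgsum : Summable (fun j => (c j : ℂ) • γ (w j)) := by
    apply Summable.of_norm
    exact Summable.of_nonneg_of_le (fun _ => norm_nonneg _)
      (fun j => le_trans (hnrm j) (hεle j)) hhalf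
  set f : H := ∑' j, (c j : ℂ) • γ (w j) with hfdef
  set R' : ℝ := max R 1 with hR'def
  have hR'0 : 0 ≤ R' := le_trans zero_le_one (le_max_right _ _)
  have hgsumα : ∀ α : Fin m → ℕ,
      Summable (fun j => ((c j : ℂ) * ∏ i, (w j i) ^ (α i)) • γ (w j)) := by
    intro α
    apply Summable.of_norm
    refine Summable.of_nonneg_of_le (fun _ => norm_nonneg _) (fun j => ?_)
      (hhalf.mul_right (R' ^ (∑ i, α i)))
    rw [norm_smul, norm_mul]
    have h1 : ‖∏ i, (w j i) ^ (α i)‖ ≤ R' ^ (∑ i, α i) :=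
      prod_pow_norm_le (w j) R' (fun i => le_trans (hwRi j i) (le_max_left _ _)) α
    calc ‖(c j : ℂ)‖ * ‖∏ i, (w j i) ^ (α i)‖ * ‖γ (w j)‖
        = (‖(c j : ℂ)‖ * ‖γ (w j)‖) * ‖∏ i, (w j i) ^ (α i)‖ := by ring
      _ ≤ ((1/2:ℝ)^j) * (R' ^ (∑ i, α i)) := by
          refine mul_le_mul ?_ h1 (norm_nonneg _) (by positivity)
          rw [Complex.norm_real, Real.norm_eq_abs, abs_of_pos (hcpos j)]
          exact le_trans (hcγ j) (hεle j)
  have hTf : ∀ α : Fin m → ℕ, (List.ofFn fun i => T i ^ α i).prod f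
      = ∑' j, ((c j : ℂ) * ∏ i, (w j i) ^ (α i)) • γ (w j) := by
    intro α
    rw [hfdef, ContinuousLinearMap.map_tsum _ hgsum]
    refine tsum_congr fun j => ?_
    rw [map_smul, hlist (w j) (hwΩ j) α, smul_smul]
  -- density via orthogonality
  refine ⟨f, ?_⟩
  rw [Submodule.dense_iff_topologicalClosure_eq_top, Submodule.topologicalClosure_eq_top_iff,
    Submodule.eq_bot_iff]
  intro φ hφ
  have hperp : ∀ α : Fin m → ℕ,
      (inner ℂ φ ((List.ofFn fun i => T i ^ α i).prod f) : ℂ) = 0 := by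
    intro α
    have hmem : (List.ofFn fun i => T i ^ α i).prod f ∈ Submodule.span ℂ
        {x : H | ∃ α : Fin m → ℕ, x = (List.ofFn (fun i => (T i) ^ (α i))).prod f} :=
      Submodule.subset_span ⟨α, rfl⟩
    exact inner_eq_zero_symm.mp (hφ _ hmem)
  have hmomφ : ∀ α : Fin m → ℕ,
      ∑' j, ((c j : ℂ) * (inner ℂ φ (γ (w j)) : ℂ)) * ∏ i, (w j i) ^ (α i) = 0 := by
    intro α
    have h1 : (innerSL ℂ φ) ((List.ofFn fun i => T i ^ α i).prod f) = 0 := hperp α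
    rw [hTf α, ContinuousLinearMap.map_tsum _ (hgsumα α)] at h1
    rw [← h1]
    refine tsum_congr fun j => ?_
    simp only [innerSL_apply_apply, inner_smul_right]
    ring
  have hd : ∀ j, ‖(c j : ℂ) * (inner ℂ φ (γ (w j)) : ℂ)‖ ≤ ‖φ‖ * ε j := by
    intro j
    rw [norm_mul, Complex.norm_real, Real.norm_eq_abs, abs_of_pos (hcpos j)]
    calc c j * ‖(inner ℂ φ (γ (w j)) : ℂ)‖ ≤ c j * (‖φ‖ * ‖γ (w j)‖) :=
          mul_le_mul_of_nonneg_left (norm_inner_le_norm _ _) (hcpos j).le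
      _ = ‖φ‖ * (c j * ‖γ (w j)‖) := by ring
      _ ≤ ‖φ‖ * ε j := mul_le_mul_of_nonneg_left (hcγ j) (norm_nonneg _)
  have hzero : ∀ j, (inner ℂ φ (γ (w j)) : ℂ) = 0 := by
    intro j
    have := hrig (‖φ‖) (fun j => (c j : ℂ) * (inner ℂ φ (γ (w j)) : ℂ)) hd hmomφ j
    rcases mul_eq_zero.mp this with h | h
    · exact absurd h (by exact_mod_cast (hcpos j).ne')
    · exact h
  -- extend to all of Ω by continuity
  have hΩzero : ∀ z ∈ Ω, (inner ℂ φ (γ z) : ℂ) = 0 := by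
    intro z hz
    have hcont : ContinuousOn (fun y => (inner ℂ φ (γ y) : ℂ)) Ω :=
      (innerSL ℂ φ).continuous.comp_continuousOn hγ.continuousOn
    obtain ⟨u, hu_mem, hu_lim⟩ := mem_closure_iff_seq_limit.mp (htcl z hz)
    have h1 : Filter.Tendsto (fun n => (inner ℂ φ (γ (u n)) : ℂ)) Filter.atTop
        (nhds (inner ℂ φ (γ z))) := by
      refine ((hcont z hz).tendsto).comp ?_
      exact tendsto_nhdsWithin_iff.mpr
        ⟨hu_lim, Filter.Eventually.of_forall fun n => htΩ (hu_mem n)⟩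
    have h2 : (fun n => (inner ℂ φ (γ (u n)) : ℂ)) = fun _ => (0 : ℂ) := by
      funext n
      obtain ⟨j, hj⟩ := hrange (hu_mem n)
      rw [← hj]
      exact hzero j
    rw [h2] at h1
    exact (tendsto_nhds_unique h1 tendsto_const_nhds)
  have hφ2 : φ ∈ (Submodule.span ℂ (γ '' Ω))ᗮ := by
    rw [Submodule.mem_orthogonal]
    intro u hu
    induction hu using Submodule.span_induction with
    | mem x hx =>
      obtain ⟨z, hz, rfl⟩ := hx
      exact inner_eq_zero_symm.mpr (hΩzero z hz)
    | zero => exact inner_zero_left _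
    | add x y _ _ hx hy => rw [inner_add_left, hx, hy, add_zero]
    | smul a x _ hx => rw [inner_smul_left, hx, mul_zero]
  have hbot2 : (Submodule.span ℂ (γ '' Ω))ᗮ = ⊥ :=
    Submodule.topologicalClosure_eq_top_iff.mp
      (Submodule.dense_iff_topologicalClosure_eq_top.mp hspan)
  rw [hbot2] at hφ2
  exact hφ2
end
end

section
/- Let H be a Hilbert space, M > 0, δ_i > 0, and (a_α) ⊂ H with ‖a_α‖ ≤ M δ^{−α}. With ξ_α = 1/((|α|!)^{α!}) and f = ∑_α ξ_α a_α, and assuming T^β a_α = a_{α−β} for α ≥ β and 0 otherwise, one has ‖(1/ξ_{(k+1)ε}) T^{(k+1)ε} f − a_0‖ ≤ (M/(k+1)!)·e^{1/δ₁+⋯+1/δ_m} for every positive integer k; consequently a_0 lies in the closed span of {T^α f : α ∈ ℤ₊^m}. -/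
open Filter Topology

private lemma hasSum_exp_real (x : ℝ) :
    HasSum (fun t : ℕ => x ^ t / (t.factorial : ℝ)) (Real.exp x) := by
  have h := (Real.summable_pow_div_factorial x).hasSum
  have : ∑' t : ℕ, x ^ t / (t.factorial : ℝ) = Real.exp x := by
    rw [Real.exp_eq_exp_ℝ, NormedSpace.exp_eq_tsum_div]
  rwa [this] at h

set_option maxHeartbeats 1000000 in
private lemma auxPiHasSum : ∀ (m : ℕ) (c : Fin m → ℝ), (∀ i, 0 ≤ c i) →
    HasSum (fun γ : Fin m → ℕ => ∏ i, c i ^ γ i / ((γ i).factorial : ℝ))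
      (∏ i, Real.exp (c i)) := by
  intro m
  induction m with
  | zero =>
    intro c _
    have h := hasSum_unique (fun _ : Fin 0 → ℕ => (1 : ℝ))
    simpa using h
  | succ m ih =>
    intro c hc
    have h1 : HasSum (fun t : ℕ => c 0 ^ t / (t.factorial : ℝ)) (Real.exp (c 0)) :=
      hasSum_exp_real (c 0)
    have h2 := ih (fun i => c i.succ) (fun i => hc _)
    have hnn1 : (0 : ℕ → ℝ) ≤ fun t : ℕ => c 0 ^ t / (t.factorial : ℝ) := fun t =>
      div_nonneg (pow_nonneg (hc 0) t) (Nat.cast_nonneg _)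
    have hnn2 : (0 : (Fin m → ℕ) → ℝ) ≤
        fun γ : Fin m → ℕ => ∏ i, c i.succ ^ γ i / ((γ i).factorial : ℝ) :=
      fun γ => Finset.prod_nonneg fun i _ =>
        div_nonneg (pow_nonneg (hc i.succ) _) (Nat.cast_nonneg _)
    have hs : Summable (fun p : ℕ × (Fin m → ℕ) =>
        (c 0 ^ p.1 / (p.1.factorial : ℝ)) *
          ∏ i, c i.succ ^ p.2 i / ((p.2 i).factorial : ℝ)) :=
      Summable.mul_of_nonneg (f := fun t : ℕ => c 0 ^ t / (t.factorial : ℝ))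
        (g := fun γ : Fin m → ℕ => ∏ i, c i.succ ^ γ i / ((γ i).factorial : ℝ))
        h1.summable h2.summable hnn1 hnn2
    have h3 := h1.mul h2 hs
    have he := (Fin.consEquiv (fun _ : Fin (m + 1) => ℕ)).hasSum_iff
      (f := fun γ : Fin (m + 1) → ℕ => ∏ i, c i ^ γ i / ((γ i).factorial : ℝ))
      (a := ∏ i, Real.exp (c i))
    rw [← he]
    have hfe : ((fun γ : Fin (m + 1) → ℕ => ∏ i, c i ^ γ i / ((γ i).factorial : ℝ)) ∘
        (Fin.consEquiv (fun _ : Fin (m + 1) => ℕ))) = fun p : ℕ × (Fin m → ℕ) =>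
        (c 0 ^ p.1 / (p.1.factorial : ℝ)) *
          ∏ i, c i.succ ^ p.2 i / ((p.2 i).factorial : ℝ) := by
      funext p
      simp [Fin.consEquiv, Fin.prod_univ_succ]
      rw [div_mul_div_comm]
    rw [hfe, Fin.prod_univ_succ (fun i => Real.exp (c i))]
    exact h3

private lemma auxNat (m n : ℕ) (hm : 1 ≤ m) (hn : 2 ≤ n) (γ : Fin m → ℕ) (hγ : γ ≠ 0) :
    n.factorial * (∏ i, (γ i).factorial) * ((m * n).factorial) ^ (n.factorial ^ m)
      ≤ ((∑ i, γ i) + m * n).factorial ^ (∏ i, (γ i + n).factorial) := by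
  obtain ⟨j, hj⟩ : ∃ j, γ j ≠ 0 := by
    by_contra h
    push_neg at h
    exact hγ (funext fun i => h i)
  set G := ∏ i, (γ i).factorial with hG
  set N := ∑ i, γ i with hN
  set p := n.factorial ^ m with hp
  set q := ∏ i, (γ i + n).factorial with hq
  set A := (m * n).factorial with hA
  set B := (N + m * n).factorial with hB
  have hG1 : 1 ≤ G := Finset.one_le_prod' fun i _ => (γ i).factorial_pos
  have hp1 : 1 ≤ p := Nat.one_le_pow _ _ n.factorial_pos
  have hN1 : 1 ≤ N :=
    le_trans (Nat.one_le_iff_ne_zero.2 hj)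
      (Finset.single_le_sum (fun i _ => Nat.zero_le _) (Finset.mem_univ j))
  have hAB : A ≤ B := Nat.factorial_le (Nat.le_add_left _ _)
  have hB2 : (n + 1) * n.factorial ≤ B := by
    have h1 : (n + 1).factorial ≤ B := by
      apply Nat.factorial_le
      nlinarith
    simpa [Nat.factorial_succ] using h1
  have hBpos : 1 ≤ B := Nat.one_le_iff_ne_zero.2 (Nat.factorial_pos _).ne'
  have hB2' : 2 ≤ B := by nlinarith [Nat.factorial_pos n]
  have hfac : ∀ i : Fin m,
      (γ i + n).factorial = (n + γ i).choose (γ i) * n.factorial * (γ i).factorial := by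
    intro i
    rw [show γ i + n = n + γ i from Nat.add_comm _ _,
      ← Nat.add_choose_mul_factorial_mul_factorial n (γ i)]
  have hqeq : q = (∏ i, (n + γ i).choose (γ i)) * p * G := by
    rw [hq]
    simp_rw [hfac]
    rw [Finset.prod_mul_distrib, Finset.prod_mul_distrib, Finset.prod_const,
      Finset.card_univ, Fintype.card_fin]
  have hC : n + 1 ≤ ∏ i, (n + γ i).choose (γ i) := by
    have h1 : n + 1 ≤ (n + γ j).choose (γ j) := by
      have hsymm : (n + γ j).choose (γ j) = (n + γ j).choose n := by
        have := Nat.choose_symm (Nat.le_add_right n (γ j))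
        rw [show n + γ j - n = γ j from by omega] at this
        exact this
      rw [hsymm]
      calc n + 1 = (n + 1).choose n := (Nat.choose_succ_self_right n).symm
        _ ≤ (n + γ j).choose n := Nat.choose_le_choose n (by omega)
    refine le_trans h1 ?_
    exact Finset.single_le_prod'
      (fun i _ => Nat.one_le_iff_ne_zero.2 (Nat.choose_pos (Nat.le_add_left _ _)).ne')
      (Finset.mem_univ j)
  have hqge : p + (G + 1) ≤ q := by
    have h1 : (n + 1) * (p * G) ≤ q := by
      calc (n + 1) * (p * G) ≤ (∏ i, (n + γ i).choose (γ i)) * (p * G) :=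
            Nat.mul_le_mul_right _ hC
        _ = q := by rw [hqeq]; ring
    have hpg : p ≤ p * G := Nat.le_mul_of_pos_right p hG1
    have hgp : G ≤ p * G := Nat.le_mul_of_pos_left G hp1
    have hpg1 : 1 ≤ p * G := Nat.mul_le_mul hp1 hG1
    have h3 : 3 * (p * G) ≤ (n + 1) * (p * G) :=
      Nat.mul_le_mul_right _ (by omega)
    have h4 : p + (G + 1) ≤ 3 * (p * G) := by linarith
    exact le_trans h4 (le_trans h3 h1)
  calc n.factorial * G * A ^ p
      ≤ ((n + 1) * n.factorial * 2 ^ G) * B ^ p := by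
        have h1 : G ≤ 2 ^ G := (Nat.lt_two_pow_self (n := G)).le
        have h2 : A ^ p ≤ B ^ p := Nat.pow_le_pow_left hAB p
        have h3 : n.factorial * G ≤ (n + 1) * n.factorial * 2 ^ G := by
          calc n.factorial * G ≤ n.factorial * 2 ^ G := Nat.mul_le_mul_left _ h1
            _ ≤ (n + 1) * n.factorial * 2 ^ G := by
                apply Nat.mul_le_mul_right
                nlinarith [Nat.factorial_pos n]
        exact Nat.mul_le_mul h3 h2
    _ ≤ (B * B ^ G) * B ^ p := by
        apply Nat.mul_le_mul_right
        exact Nat.mul_le_mul hB2 (Nat.pow_le_pow_left hB2' G)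
    _ = B ^ (p + (G + 1)) := by
        rw [pow_add, pow_succ]
        ring
    _ ≤ B ^ q := Nat.pow_le_pow_right hBpos hqge

theorem stmt_11 (m : ℕ) (hm : 0 < m) {H : Type*} [NormedAddCommGroup H]
    [InnerProductSpace ℂ H] [CompleteSpace H]
    (T : Fin m → H →L[ℂ] H) (hcomm : ∀ i j, Commute (T i) (T j))
    (a : (Fin m → ℕ) → H) (M : ℝ) (hM : 0 < M) (δ : Fin m → ℝ) (hδ : ∀ i, 0 < δ i)
    (ha : ∀ α : Fin m → ℕ, ‖a α‖ ≤ M * ∏ i, (δ i)⁻¹ ^ α i)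
    (ξ : (Fin m → ℕ) → ℝ)
    (hξ : ∀ α : Fin m → ℕ,
      ξ α = (((Nat.factorial (∑ i, α i) : ℝ)) ^ (∏ i, Nat.factorial (α i)))⁻¹)
    (hshift : ∀ β α : Fin m → ℕ,
      ((∀ i, β i ≤ α i) →
        (List.ofFn (fun i => (T i) ^ (β i))).prod (a α) = a (fun i => α i - β i)) ∧
      (¬ (∀ i, β i ≤ α i) → (List.ofFn (fun i => (T i) ^ (β i))).prod (a α) = 0))
    (f : H) (hf : f = ∑' α : Fin m → ℕ, ξ α • a α) :
    (∀ k : ℕ, 1 ≤ k →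
      ‖(ξ (fun _ => k + 1))⁻¹ • (List.ofFn (fun i => (T i) ^ (k + 1))).prod f - a 0‖
        ≤ M / (Nat.factorial (k + 1) : ℝ) * Real.exp (∑ i, (δ i)⁻¹)) ∧
    a 0 ∈ closure
      ((Submodule.span ℂ
        {x : H | ∃ α : Fin m → ℕ,
          x = (List.ofFn (fun i => (T i) ^ (α i))).prod f}) : Set H) := by
  have hξpos : ∀ α, 0 < ξ α := by
    intro α
    rw [hξ]
    have : (0:ℝ) < (Nat.factorial (∑ i, α i) : ℝ) := by
      exact_mod_cast Nat.factorial_pos _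
    positivity
  have hξle : ∀ α : Fin m → ℕ, ξ α ≤ (∏ i, ((α i).factorial : ℝ))⁻¹ := by
    intro α
    rw [hξ]
    have hnat : (∏ i, (α i).factorial) ≤
        (Nat.factorial (∑ i, α i)) ^ (∏ i, Nat.factorial (α i)) := by
      calc (∏ i, (α i).factorial) ≤ Nat.factorial (∑ i, α i) :=
            Nat.le_of_dvd (Nat.factorial_pos _)
              (Nat.prod_factorial_dvd_factorial_sum _ _)
        _ ≤ (Nat.factorial (∑ i, α i)) ^ (∏ i, Nat.factorial (α i)) :=
            Nat.le_self_pow (Finset.prod_pos fun i _ =>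
              Nat.factorial_pos _).ne' _
    have hQpos : (0:ℝ) < ∏ i, ((α i).factorial : ℝ) :=
      Finset.prod_pos fun i _ => by exact_mod_cast Nat.factorial_pos _
    gcongr
    exact_mod_cast hnat
  have hδ' : ∀ i, (0:ℝ) ≤ (δ i)⁻¹ := fun i => (inv_pos.2 (hδ i)).le
  have hDom := auxPiHasSum m (fun i => (δ i)⁻¹) hδ'
  have hbound : ∀ α : Fin m → ℕ,
      ‖ξ α • a α‖ ≤ M * ∏ i, ((δ i)⁻¹ ^ α i / ((α i).factorial : ℝ)) := by
    intro α
    rw [norm_smul, Real.norm_eq_abs, abs_of_pos (hξpos α)]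
    calc ξ α * ‖a α‖ ≤ ξ α * (M * ∏ i, (δ i)⁻¹ ^ α i) :=
          mul_le_mul_of_nonneg_left (ha α) (hξpos α).le
      _ ≤ (∏ i, ((α i).factorial : ℝ))⁻¹ * (M * ∏ i, (δ i)⁻¹ ^ α i) := by
          apply mul_le_mul_of_nonneg_right (hξle α)
          have : (0:ℝ) ≤ ∏ i, (δ i)⁻¹ ^ α i :=
            Finset.prod_nonneg fun i _ => pow_nonneg (hδ' i) _
          positivity
      _ = M * ∏ i, ((δ i)⁻¹ ^ α i / ((α i).factorial : ℝ)) := by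
          rw [Finset.prod_div_distrib]
          ring
  have hSummable : Summable (fun α : Fin m → ℕ => ξ α • a α) :=
    Summable.of_norm_bounded (hDom.summable.mul_left M) hbound
  have hpart1 : ∀ k : ℕ, 1 ≤ k →
      ‖(ξ (fun _ => k + 1))⁻¹ • (List.ofFn (fun i => (T i) ^ (k + 1))).prod f - a 0‖
        ≤ M / (Nat.factorial (k + 1) : ℝ) * Real.exp (∑ i, (δ i)⁻¹) := by
    intro k hk
    set β : Fin m → ℕ := fun _ => k + 1 with hβ
    set Sop : H →L[ℂ] H := (List.ofFn fun i => (T i) ^ (k + 1)).prod with hSop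
    have hsh1 : ∀ α : Fin m → ℕ, (∀ i, k + 1 ≤ α i) →
        Sop (a α) = a fun i => α i - (k + 1) := by
      intro α hα
      simpa using (hshift (fun _ => k + 1) α).1 hα
    have hsh2 : ∀ α : Fin m → ℕ, ¬ (∀ i, k + 1 ≤ α i) → Sop (a α) = 0 := by
      intro α hα
      simpa using (hshift (fun _ => k + 1) α).2 hα
    set e : (Fin m → ℕ) → (Fin m → ℕ) := fun γ i => γ i + (k + 1) with he
    have he_inj : Function.Injective e := by
      intro x y hxy
      funext i
      have := congrFun hxy i
      simp only [e] at this
      omega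
    have hgsum : Summable (fun α : Fin m → ℕ => ξ α • Sop (a α)) := by
      have h := hSummable.map (Sop.restrictScalars ℝ) (Sop.restrictScalars ℝ).continuous
      refine h.congr fun α => ?_
      simp
    have hSf : Sop f = ∑' α, ξ α • Sop (a α) := by
      rw [hf]
      have := (Sop.restrictScalars ℝ).map_tsum hSummable
      simpa using this
    have hsupp : Function.support (fun α => ξ α • Sop (a α)) ⊆ Set.range e := by
      intro α hα
      by_cases hc : ∀ i, k + 1 ≤ α i
      · refine ⟨fun i => α i - (k + 1), funext fun i => ?_⟩
        have := hc i
        simp only [e]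
        omega
      · exact absurd (by simp [hsh2 α hc]) hα
    have hre : ∑' γ, ξ (e γ) • Sop (a (e γ)) = ∑' α, ξ α • Sop (a α) :=
      he_inj.tsum_eq hsupp
    have hae : ∀ γ : Fin m → ℕ, Sop (a (e γ)) = a γ := by
      intro γ
      rw [hsh1 (e γ) (fun i => by simp [e])]
      congr 1
      funext i
      simp [e]
    have hsum2 : Summable (fun γ => ξ (e γ) • a γ) := by
      have h := hgsum.comp_injective he_inj
      refine h.congr fun γ => ?_
      simp [Function.comp, hae γ]
    have hmain : (ξ β)⁻¹ • Sop f = ∑' γ, ((ξ β)⁻¹ * ξ (e γ)) • a γ := by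
      have h1 : Sop f = ∑' γ, ξ (e γ) • a γ := by
        rw [hSf, ← hre]
        exact tsum_congr fun γ => by rw [hae γ]
      rw [h1, ← Summable.tsum_const_smul ((ξ β)⁻¹) hsum2]
      exact tsum_congr fun γ => smul_smul _ _ _
    have he0 : e 0 = β := by
      funext i
      simp [e, β]
    have hc0 : (ξ β)⁻¹ * ξ (e 0) = 1 := by
      rw [he0]
      exact inv_mul_cancel₀ (hξpos β).ne'
    have hsum3 : Summable (fun γ => ((ξ β)⁻¹ * ξ (e γ)) • a γ) := by
      have h := hsum2.const_smul ((ξ β)⁻¹)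
      refine h.congr fun γ => ?_
      rw [smul_smul]
    have hsplit := Summable.tsum_eq_add_tsum_ite hsum3 0
    have hdiff : (ξ β)⁻¹ • Sop f - a 0 =
        ∑' γ, if γ = 0 then (0:H) else ((ξ β)⁻¹ * ξ (e γ)) • a γ := by
      rw [hmain, hsplit, hc0, one_smul, add_sub_cancel_left]
    have hkey : ∀ γ : Fin m → ℕ, γ ≠ 0 →
        (ξ β)⁻¹ * ξ (e γ) ≤
          (((k + 1).factorial : ℝ) * ∏ i, ((γ i).factorial : ℝ))⁻¹ := by
      intro γ hγ0
      have hnat := auxNat m (k + 1) hm (by omega) γ hγ0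
      have hξβ : ξ β = (((m * (k + 1)).factorial : ℝ) ^ ((k + 1).factorial ^ m))⁻¹ := by
        rw [hξ β]
        simp [hβ, Finset.sum_const, Finset.prod_const, Finset.card_univ, smul_eq_mul]
      have hsum_e : (∑ i, e γ i) = (∑ i, γ i) + m * (k + 1) := by
        simp [e, Finset.sum_add_distrib, Finset.sum_const, Finset.card_univ, smul_eq_mul]
      have hξe : ξ (e γ) =
          ((((∑ i, γ i) + m * (k + 1)).factorial : ℝ) ^
            (∏ i, (γ i + (k + 1)).factorial))⁻¹ := by
        rw [hξ (e γ), hsum_e]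
      rw [hξβ, hξe, inv_inv]
      rw [← div_eq_mul_inv, ← one_div, div_le_div_iff₀ (by positivity) (by positivity)]
      have h2 : (((k + 1).factorial : ℝ)) * (∏ i, ((γ i).factorial : ℝ)) *
          (((m * (k + 1)).factorial : ℝ)) ^ ((k + 1).factorial ^ m)
          ≤ ((((∑ i, γ i) + m * (k + 1)).factorial : ℝ)) ^
            (∏ i, (γ i + (k + 1)).factorial) := by
        exact_mod_cast hnat
      calc (((m * (k + 1)).factorial : ℝ)) ^ ((k + 1).factorial ^ m) *
            (((k + 1).factorial : ℝ) * ∏ i, ((γ i).factorial : ℝ))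
          = (((k + 1).factorial : ℝ)) * (∏ i, ((γ i).factorial : ℝ)) *
            (((m * (k + 1)).factorial : ℝ)) ^ ((k + 1).factorial ^ m) := by ring
        _ ≤ ((((∑ i, γ i) + m * (k + 1)).factorial : ℝ)) ^
            (∏ i, (γ i + (k + 1)).factorial) := h2
        _ = 1 * ((((∑ i, γ i) + m * (k + 1)).factorial : ℝ)) ^
            (∏ i, (γ i + (k + 1)).factorial) := by ring
    have hterm : ∀ γ : Fin m → ℕ,
        ‖if γ = 0 then (0:H) else ((ξ β)⁻¹ * ξ (e γ)) • a γ‖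
          ≤ (M / ((k + 1).factorial : ℝ)) *
            ∏ i, ((δ i)⁻¹ ^ γ i / ((γ i).factorial : ℝ)) := by
      intro γ
      by_cases h0 : γ = 0
      · rw [if_pos h0, norm_zero]
        apply mul_nonneg (div_nonneg hM.le (Nat.cast_nonneg _))
        exact Finset.prod_nonneg fun i _ =>
          div_nonneg (pow_nonneg (hδ' i) _) (Nat.cast_nonneg _)
      · rw [if_neg h0, norm_smul, Real.norm_eq_abs]
        have hcpos : 0 ≤ (ξ β)⁻¹ * ξ (e γ) :=
          mul_nonneg (inv_nonneg.2 (hξpos β).le) (hξpos _).le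
        rw [abs_of_nonneg hcpos]
        have hFpos : (0:ℝ) < ((k + 1).factorial : ℝ) := by exact_mod_cast Nat.factorial_pos _
        have hQpos : (0:ℝ) < ∏ i, ((γ i).factorial : ℝ) :=
          Finset.prod_pos fun i _ => by exact_mod_cast Nat.factorial_pos _
        calc ((ξ β)⁻¹ * ξ (e γ)) * ‖a γ‖
            ≤ (((k + 1).factorial : ℝ) * ∏ i, ((γ i).factorial : ℝ))⁻¹ *
              (M * ∏ i, (δ i)⁻¹ ^ γ i) := by
              apply mul_le_mul (hkey γ h0) (ha γ) (norm_nonneg _)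
              exact inv_nonneg.2 (mul_pos hFpos hQpos).le
          _ = (M / ((k + 1).factorial : ℝ)) *
              ∏ i, ((δ i)⁻¹ ^ γ i / ((γ i).factorial : ℝ)) := by
              rw [Finset.prod_div_distrib]
              field_simp
    have hDsum : Summable (fun γ : Fin m → ℕ =>
        (M / ((k + 1).factorial : ℝ)) *
          ∏ i, ((δ i)⁻¹ ^ γ i / ((γ i).factorial : ℝ))) :=
      hDom.summable.mul_left _
    have hsn : Summable (fun γ : Fin m → ℕ =>
        ‖if γ = 0 then (0:H) else ((ξ β)⁻¹ * ξ (e γ)) • a γ‖) :=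
      Summable.of_nonneg_of_le (fun γ => norm_nonneg _) hterm hDsum
    rw [show (List.ofFn fun i => (T i) ^ (k + 1)).prod f = Sop f from rfl, hdiff]
    calc ‖∑' γ, if γ = 0 then (0:H) else ((ξ β)⁻¹ * ξ (e γ)) • a γ‖
        ≤ ∑' γ, ‖if γ = 0 then (0:H) else ((ξ β)⁻¹ * ξ (e γ)) • a γ‖ :=
          norm_tsum_le_tsum_norm hsn
      _ ≤ ∑' γ : Fin m → ℕ, (M / ((k + 1).factorial : ℝ)) *
            ∏ i, ((δ i)⁻¹ ^ γ i / ((γ i).factorial : ℝ)) :=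
          Summable.tsum_le_tsum hterm hsn hDsum
      _ = (M / ((k + 1).factorial : ℝ)) *
            ∑' γ : Fin m → ℕ, ∏ i, ((δ i)⁻¹ ^ γ i / ((γ i).factorial : ℝ)) :=
          tsum_mul_left
      _ = M / ((k + 1).factorial : ℝ) * Real.exp (∑ i, (δ i)⁻¹) := by
          rw [hDom.tsum_eq, ← Real.exp_sum]
  refine ⟨hpart1, ?_⟩
  have htend : Tendsto (fun k : ℕ =>
      (ξ (fun _ => k + 1))⁻¹ • (List.ofFn (fun i => (T i) ^ (k + 1))).prod f)
      atTop (𝓝 (a 0)) := by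
    rw [tendsto_iff_norm_sub_tendsto_zero]
    have hg : Tendsto (fun k : ℕ =>
        M / (((k + 1).factorial : ℝ)) * Real.exp (∑ i, (δ i)⁻¹)) atTop (𝓝 0) := by
      have h1 : Tendsto (fun t : ℕ => ((t.factorial : ℝ))⁻¹) atTop (𝓝 0) :=
        tendsto_inv_atTop_zero.comp (tendsto_natCast_atTop_atTop.comp factorial_tendsto_atTop)
      have h2 : Tendsto (fun k : ℕ => (((k + 1).factorial : ℝ))⁻¹) atTop (𝓝 0) :=
        h1.comp (tendsto_add_atTop_nat 1)
      have h3 := h2.const_mul (M * Real.exp (∑ i, (δ i)⁻¹))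
      rw [mul_zero] at h3
      refine h3.congr fun k => ?_
      ring
    apply squeeze_zero' (Eventually.of_forall fun k => norm_nonneg _)
      (eventually_atTop.2 ⟨1, fun k hk => hpart1 k hk⟩) hg
  refine mem_closure_of_tendsto htend (Eventually.of_forall fun k => ?_)
  exact Submodule.smul_of_tower_mem _ _
    (Submodule.subset_span ⟨fun _ => k + 1, rfl⟩)
end

section
/- For all positive integers k, m, and every nonzero multi-index α ∈ ℤ₊^m, the ratio ((m(k+1))!)^{((k+1)ε)!} / ((m(k+1)+|α|)!)^{((k+1)ε+α)!} ≤ 1/((k+1)!·α!), where ε = (1,…,1) ∈ ℤ₊^m. -/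
theorem stmt_12 (m k : ℕ) (hm : 0 < m) (hk : 0 < k)
    (α : Fin m → ℕ) (hα : α ≠ 0) :
    ((Nat.factorial (m * (k + 1)) : ℝ)) ^ ((Nat.factorial (k + 1)) ^ m) /
      ((Nat.factorial (m * (k + 1) + ∑ i, α i) : ℝ)) ^ (∏ i, Nat.factorial (k + 1 + α i))
      ≤ 1 / ((Nat.factorial (k + 1) : ℝ) * ∏ i, (Nat.factorial (α i) : ℝ)) := by
  set A := Nat.factorial (m * (k + 1)) with hA
  set B := Nat.factorial (m * (k + 1) + ∑ i, α i) with hB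
  set P := (Nat.factorial (k + 1)) ^ m with hP
  set Q := ∏ i, Nat.factorial (k + 1 + α i) with hQ
  set C := Nat.factorial (k + 1) * ∏ i, Nat.factorial (α i) with hC
  -- key nat inequality: C * A^P ≤ B^Q
  have hAB : A ≤ B := Nat.factorial_le (Nat.le_add_right _ _)
  have hPQ : P < Q := by
    rw [hP, hQ]
    have : (Nat.factorial (k+1)) ^ m = ∏ _i : Fin m, Nat.factorial (k+1) := by simp
    rw [this]
    apply Finset.prod_lt_prod
    · intro i _; exact Nat.factorial_pos _
    · intro i _; exact Nat.factorial_le (by omega)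
    · obtain ⟨j, hj⟩ : ∃ j, α j ≠ 0 := by
        by_contra h
        push_neg at h
        exact hα (funext h)
      exact ⟨j, Finset.mem_univ j, Nat.factorial_lt (by omega) |>.2 (by omega)⟩
  have hCB : C ≤ B := by
    have h1 : (∏ i, Nat.factorial (α i)) ≤ Nat.factorial (∑ i, α i) :=
      Nat.le_of_dvd (Nat.factorial_pos _) (Nat.prod_factorial_dvd_factorial_sum _ _)
    have h2 : Nat.factorial (k + 1) * Nat.factorial (∑ i, α i) ≤
        Nat.factorial (k + 1 + ∑ i, α i) :=
      Nat.le_of_dvd (Nat.factorial_pos _) (Nat.factorial_mul_factorial_dvd_factorial_add _ _)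
    have h3 : Nat.factorial (k + 1 + ∑ i, α i) ≤ B := by
      apply Nat.factorial_le
      have : k + 1 ≤ m * (k + 1) := Nat.le_mul_of_pos_left _ hm
      omega
    calc C ≤ Nat.factorial (k + 1) * Nat.factorial (∑ i, α i) :=
            Nat.mul_le_mul_left _ h1
      _ ≤ Nat.factorial (k + 1 + ∑ i, α i) := h2
      _ ≤ B := h3
  have key : C * A ^ P ≤ B ^ Q := by
    calc C * A ^ P ≤ B * B ^ P :=
          Nat.mul_le_mul hCB (Nat.pow_le_pow_left hAB _)
      _ = B ^ (P + 1) := by ring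
      _ ≤ B ^ Q := Nat.pow_le_pow_right (Nat.factorial_pos _) (by omega)
  have hBpos : (0:ℝ) < (B : ℝ) ^ Q := by positivity
  have hCpos : (0:ℝ) < (Nat.factorial (k + 1) : ℝ) * ∏ i, (Nat.factorial (α i) : ℝ) := by
    positivity
  rw [div_le_div_iff₀ hBpos hCpos]
  have : ((Nat.factorial (k + 1) : ℝ) * ∏ i, (Nat.factorial (α i) : ℝ)) = (C : ℝ) := by
    rw [hC]; push_cast; ring
  rw [this, one_mul]
  calc (A:ℝ) ^ P * (C:ℝ) = ((C * A ^ P : ℕ) : ℝ) := by push_cast; ring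
    _ ≤ ((B ^ Q : ℕ) : ℝ) := by exact_mod_cast key
    _ = (B:ℝ) ^ Q := by push_cast; ring
end

section
/- For all positive integers k, l, m with η, α ∈ ℤ₊^m, |η| = l, |α| ≥ l, α ≠ η, the inequality ((k+l+2)ε + α − η)! ≥ ((k+l+2)ε)! + 1 holds, i.e., the difference of multi-factorials ((k+l+2)ε+α−η)! − ((k+l+2)ε)! is a positive integer. -/
lemma aux1_s13 (n d : ℕ) : n.factorial * (n+1)^d ≤ (n+d).factorial := by
  induction d with
  | zero => simp
  | succ d ih =>
    have : (n + (d+1)).factorial = (n + d + 1) * (n + d).factorial := by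
      rw [show n + (d+1) = (n+d) + 1 by ring, Nat.factorial_succ]
    rw [this, pow_succ]
    calc n.factorial * ((n+1)^d * (n+1)) = (n+1) * (n.factorial * (n+1)^d) := by ring
    _ ≤ (n+1) * (n+d).factorial := Nat.mul_le_mul_left _ ih
    _ ≤ (n+d+1) * (n+d).factorial := Nat.mul_le_mul_right _ (by omega)

lemma aux3 (n d : ℕ) (h : d ≤ n) : n.factorial ≤ (n - d).factorial * n^d := by
  induction d with
  | zero => simp
  | succ d ih =>
    have h' : d ≤ n := by omega
    have e1 : n - d = (n - (d+1)) + 1 := by omega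
    calc n.factorial ≤ (n - d).factorial * n^d := ih h'
    _ = ((n - (d+1)) + 1) * (n - (d+1)).factorial * n^d := by rw [e1, Nat.factorial_succ]
    _ ≤ n * (n - (d+1)).factorial * n^d := by
        have : (n - (d+1)) + 1 ≤ n := by omega
        exact Nat.mul_le_mul_right _ (Nat.mul_le_mul_right _ this)
    _ = (n - (d+1)).factorial * n^(d+1) := by ring

lemma aux2_s13 (n d : ℕ) (h : d ≤ n) : n.factorial ≤ (n - d).factorial * (n+1)^d :=
  (aux3 n d h).trans (Nat.mul_le_mul_left _ (Nat.pow_le_pow_left (by omega) d))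

lemma aux2' (n d : ℕ) (h1 : 1 ≤ d) (h2 : d ≤ n) : n.factorial < (n - d).factorial * (n+1)^d := by
  refine (aux3 n d h2).trans_lt ?_
  have hp : n^d < (n+1)^d := Nat.pow_lt_pow_left (by omega) (by omega)
  exact (Nat.mul_lt_mul_left (Nat.factorial_pos _)).mpr hp

lemma keyle (n a e : ℕ) (he : e ≤ n) :
    n.factorial * (n+1)^a ≤ (n + a - e).factorial * (n+1)^e := by
  rcases le_or_gt e a with h | h
  · calc n.factorial * (n+1)^a = n.factorial * (n+1)^(a-e) * (n+1)^e := by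
          rw [mul_assoc, ← pow_add]; congr 2; omega
    _ ≤ (n + (a-e)).factorial * (n+1)^e := Nat.mul_le_mul_right _ (aux1_s13 n (a-e))
    _ = (n + a - e).factorial * (n+1)^e := by congr 2; omega
  · calc n.factorial * (n+1)^a ≤ ((n - (e-a)).factorial * (n+1)^(e-a)) * (n+1)^a :=
          Nat.mul_le_mul_right _ (aux2_s13 n (e-a) (by omega))
    _ = (n + a - e).factorial * (n+1)^e := by
        rw [mul_assoc, ← pow_add]; congr 2 <;> omega

lemma keylt (n a e : ℕ) (he : e ≤ n) (h : a < e) :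
    n.factorial * (n+1)^a < (n + a - e).factorial * (n+1)^e := by
  calc n.factorial * (n+1)^a < ((n - (e-a)).factorial * (n+1)^(e-a)) * (n+1)^a :=
      (Nat.mul_lt_mul_right (Nat.pow_pos (by omega))).mpr
        (aux2' n (e-a) (by omega) (by omega))
  _ = (n + a - e).factorial * (n+1)^e := by
      rw [mul_assoc, ← pow_add]; congr 2 <;> omega

theorem stmt_13 (m k l : ℕ) (hm : 0 < m) (hk : 0 < k) (hl : 0 < l)
    (η α : Fin m → ℕ) (hη : ∑ i, η i = l) (hα : l ≤ ∑ i, α i) (hne : α ≠ η) :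
    ∏ i, Nat.factorial (k + l + 2 + α i - η i) ≥ (∏ _i : Fin m, Nat.factorial (k + l + 2)) + 1 := by
  set n := k + l + 2 with hn
  have hηle : ∀ i, η i ≤ n := by
    intro i
    have : η i ≤ ∑ j, η j := Finset.single_le_sum (fun j _ => Nat.zero_le _) (Finset.mem_univ i)
    omega
  have S1 : ∏ i, (n.factorial * (n+1)^(α i)) = (∏ _i : Fin m, n.factorial) * (n+1)^(∑ i, α i) := by
    rw [Finset.prod_mul_distrib, Finset.prod_pow_eq_pow_sum]
  have S2 : ∏ i, ((n + α i - η i).factorial * (n+1)^(η i))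
      = (∏ i, (n + α i - η i).factorial) * (n+1)^l := by
    rw [Finset.prod_mul_distrib, Finset.prod_pow_eq_pow_sum, hη]
  have key : (∏ _i : Fin m, n.factorial) * (n+1)^l < (∏ i, (n + α i - η i).factorial) * (n+1)^l := by
    rcases lt_or_eq_of_le hα with hlt | heq
    · calc (∏ _i : Fin m, n.factorial) * (n+1)^l
          < (∏ _i : Fin m, n.factorial) * (n+1)^(∑ i, α i) := by
            exact (Nat.mul_lt_mul_left
              (Finset.prod_pos fun i _ => Nat.factorial_pos _)).mpr
              (Nat.pow_lt_pow_right (by omega) hlt)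
      _ = ∏ i, (n.factorial * (n+1)^(α i)) := S1.symm
      _ ≤ ∏ i, ((n + α i - η i).factorial * (n+1)^(η i)) :=
          Finset.prod_le_prod (fun i _ => Nat.zero_le _) (fun i _ => keyle n (α i) (η i) (hηle i))
      _ = _ := S2
    · -- sums equal; find i1 with α i1 < η i1
      have hex : ∃ i, α i < η i := by
        by_contra hcon
        push_neg at hcon
        have : α = η := by
          funext i
          have := Finset.sum_le_sum (s := Finset.univ) (fun j (_ : j ∈ Finset.univ) => hcon j)
          have heq2 : ∑ j, η j = ∑ j, α j := by omega
          by_contra hne2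
          have : η i < α i := lt_of_le_of_ne (hcon i) (Ne.symm hne2)
          have hstrict : ∑ j, η j < ∑ j, α j :=
            Finset.sum_lt_sum (fun j _ => hcon j) ⟨i, Finset.mem_univ i, this⟩
          omega
        exact hne this
      obtain ⟨i1, hi1⟩ := hex
      calc (∏ _i : Fin m, n.factorial) * (n+1)^l
          = (∏ _i : Fin m, n.factorial) * (n+1)^(∑ i, α i) := by rw [← heq]
      _ = ∏ i, (n.factorial * (n+1)^(α i)) := S1.symm
      _ < ∏ i, ((n + α i - η i).factorial * (n+1)^(η i)) := by
          apply Finset.prod_lt_prod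
          · exact fun i _ => Nat.mul_pos (Nat.factorial_pos _) (Nat.pow_pos (by omega))
          · exact fun i _ => keyle n (α i) (η i) (hηle i)
          · exact ⟨i1, Finset.mem_univ i1, keylt n (α i1) (η i1) (hηle i1) hi1⟩
      _ = _ := S2
  have := Nat.lt_of_mul_lt_mul_right key
  omega
end
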